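/- arXiv:0910.3369 — 3 statements merged into one kernel-verified Lean document; each statement's English description precedes it below -/
import Mathlib

section
/- Let (x_i, f_i) be a Schauder frame of a Banach space X. Then the set Y = { f ∈ X* : the series Σ_{i=1}^∞ f(x_i) f_i converges in norm in X* to f } is a norm-closed linear subspace of X*. Moreover, if the frame is locally shrinking, then Y equals the closed linear span of (f_i)_{i∈ℕ} in X*. -/
open Filter Topology

/-- The quantity `sup { |g z| : z ∈ span (x i : i ≥ n), ‖z‖ ≤ 1 }`, i.e. the norm of the
restriction of `g` to the span of the tail `(x i)_{i ≥ n}`. -/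
noncomputable def tailSupX {X : Type*} [NormedAddCommGroup X] [NormedSpace ℝ X]
    (x : ℕ → X) (g : X →L[ℝ] ℝ) (n : ℕ) : ℝ :=
  sSup ((fun z : X => |g z|) ''
    {z | z ∈ Submodule.span ℝ (x '' {i | n ≤ i}) ∧ ‖z‖ ≤ 1})

/-!
By Banach–Steinhaus the partial-sum operators `Sₙ v = ∑_{i<n} fᵢ(v) xᵢ` are uniformly bounded,
and `∑_{i<n} g(xᵢ) fᵢ = g ∘ Sₙ`. So `Y` is the set where a uniformly bounded, hence
equicontinuous, family of operators on `X*` converges to the identity, which is a closed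
subspace; its partial sums lie in `span (fᵢ)`, so `Y` sits in the closed span. Conversely,
`v - Sₙ v` lies in the closed span of the tail `(xᵢ)_{i ≥ n}`, whence
`‖f_m - f_m ∘ Sₙ‖ ≤ (1 + sup ‖Sₖ‖) · tailSupX x f_m n`; local shrinking puts every `f_m` in `Y`.
-/

section Convergence

variable {ι 𝕜 E : Type*} [NontriviallyNormedField 𝕜] [NormedAddCommGroup E] [NormedSpace 𝕜 E]

def convergenceSubmodule (T : ι → E →L[𝕜] E) (l : Filter ι) : Submodule 𝕜 E where
  carrier := {g | Tendsto (fun i => T i g) l (𝓝 g)}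
  zero_mem' := by simpa only [Set.mem_ofPred_eq, map_zero] using tendsto_const_nhds
  add_mem' {a b} ha hb := by simpa only [Set.mem_ofPred_eq, map_add] using ha.add hb
  smul_mem' c a ha := by simpa only [Set.mem_ofPred_eq, map_smul] using ha.const_smul c

theorem mem_convergenceSubmodule {T : ι → E →L[𝕜] E} {l : Filter ι} {g : E} :
    g ∈ convergenceSubmodule T l ↔ Tendsto (fun i => T i g) l (𝓝 g) :=
  Iff.rfl

theorem isClosed_convergenceSubmodule {T : ι → E →L[𝕜] E} (l : Filter ι)
    (hT : ∃ C, ∀ i, ‖T i‖ ≤ C) : IsClosed (convergenceSubmodule T l : Set E) :=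
  Equicontinuous.isClosed_setOfPred_tendsto (F := fun i => ⇑(T i))
    (((NormedSpace.equicontinuous_TFAE T).out 5 1).mp hT) continuous_id

end Convergence

section FramePartialSums

variable {𝕜 X : Type*} [NontriviallyNormedField 𝕜] [NormedAddCommGroup X] [NormedSpace 𝕜 X]
  {x : ℕ → X} {f : ℕ → X →L[𝕜] 𝕜}

variable (x f) in
noncomputable def frameSum (n : ℕ) : X →L[𝕜] X :=
  ∑ i ∈ Finset.range n, (f i).smulRight (x i)

theorem frameSum_apply (n : ℕ) (v : X) :
    frameSum x f n v = ∑ i ∈ Finset.range n, f i v • x i := by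
  simp [frameSum]

theorem exists_norm_frameSum_le [CompleteSpace X]
    (hframe : ∀ v, Tendsto (fun n => frameSum x f n v) atTop (𝓝 v)) :
    ∃ C, ∀ n, ‖frameSum x f n‖ ≤ C :=
  banach_steinhaus fun v =>
    let ⟨C, hC⟩ := (hframe v).norm.bddAbove_range
    ⟨C, fun n => hC ⟨n, rfl⟩⟩

theorem sub_frameSum_mem_closure_span
    (hframe : ∀ v, Tendsto (fun n => frameSum x f n v) atTop (𝓝 v)) (n : ℕ) (v : X) :
    v - frameSum x f n v ∈ closure (Submodule.span 𝕜 (x '' {i | n ≤ i}) : Set X) := by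
  refine mem_closure_of_tendsto ((hframe v).sub_const _) ?_
  filter_upwards [eventually_ge_atTop n] with k hk
  rw [frameSum_apply, frameSum_apply, ← Finset.sum_Ico_eq_sub _ hk]
  exact Submodule.sum_mem _ fun i hi =>
    Submodule.smul_mem _ _ (Submodule.subset_span ⟨i, (Finset.mem_Ico.mp hi).1, rfl⟩)

variable (x f) in
noncomputable def dualFrameSum (n : ℕ) : (X →L[𝕜] 𝕜) →L[𝕜] X →L[𝕜] 𝕜 :=
  (ContinuousLinearMap.compL 𝕜 X X 𝕜).flip (frameSum x f n)

theorem dualFrameSum_apply_eq_comp (n : ℕ) (g : X →L[𝕜] 𝕜) :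
    dualFrameSum x f n g = g.comp (frameSum x f n) :=
  rfl

theorem dualFrameSum_apply (n : ℕ) (g : X →L[𝕜] 𝕜) :
    dualFrameSum x f n g = ∑ i ∈ Finset.range n, g (x i) • f i := by
  ext v
  simp [dualFrameSum_apply_eq_comp, frameSum_apply, mul_comm]

theorem norm_dualFrameSum_le (n : ℕ) : ‖dualFrameSum x f n‖ ≤ ‖frameSum x f n‖ :=
  ContinuousLinearMap.opNorm_le_bound _ (norm_nonneg _) fun g => by
    rw [dualFrameSum_apply_eq_comp, mul_comm]
    exact g.opNorm_comp_le _

theorem dualFrameSum_apply_mem_span (n : ℕ) (g : X →L[𝕜] 𝕜) :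
    dualFrameSum x f n g ∈ Submodule.span 𝕜 (Set.range f) := by
  rw [dualFrameSum_apply]
  exact Submodule.sum_mem _ fun i _ => Submodule.smul_mem _ _ (Submodule.subset_span ⟨i, rfl⟩)

end FramePartialSums

section TailSup

variable {X : Type*} [NormedAddCommGroup X] [NormedSpace ℝ X] {x : ℕ → X} {g : X →L[ℝ] ℝ}
  {n : ℕ}

theorem le_tailSupX {z : X} (hz : z ∈ Submodule.span ℝ (x '' {i | n ≤ i})) (hz1 : ‖z‖ ≤ 1) :
    |g z| ≤ tailSupX x g n := by
  refine le_csSup ⟨‖g‖, ?_⟩ ⟨z, ⟨hz, hz1⟩, rfl⟩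
  rintro _ ⟨w, ⟨-, hw⟩, rfl⟩
  exact (g.le_opNorm w).trans (mul_le_of_le_one_right (norm_nonneg _) hw)

theorem tailSupX_nonneg : 0 ≤ tailSupX x g n := by
  simpa using le_tailSupX (x := x) (g := g) (n := n) (Submodule.zero_mem _) (by simp)

theorem abs_le_tailSupX_mul_norm {z : X}
    (hz : z ∈ closure (Submodule.span ℝ (x '' {i | n ≤ i}) : Set X)) :
    |g z| ≤ tailSupX x g n * ‖z‖ := by
  refine closure_minimal (fun z hz => ?_)
    (isClosed_le g.continuous.abs (continuous_const.mul continuous_norm)) hz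
  rcases eq_or_ne z 0 with rfl | hz0
  · simp
  have hnz : 0 < ‖z‖ := norm_pos_iff.mpr hz0
  have hunit := le_tailSupX (g := g) (Submodule.smul_mem _ ‖z‖⁻¹ hz)
    (by rw [norm_smul, norm_inv, norm_norm, inv_mul_cancel₀ hnz.ne'])
  rwa [map_smul, smul_eq_mul, abs_mul, abs_inv, abs_norm, inv_mul_le_iff₀ hnz, mul_comm] at hunit

variable {f : ℕ → X →L[ℝ] ℝ}

theorem norm_sub_dualFrameSum_le
    (hframe : ∀ v, Tendsto (fun n => frameSum x f n v) atTop (𝓝 v)) {C : ℝ}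
    (hC : ∀ n, ‖frameSum x f n‖ ≤ C) (g : X →L[ℝ] ℝ) (n : ℕ) :
    ‖g - dualFrameSum x f n g‖ ≤ tailSupX x g n * (1 + C) := by
  have hC₀ : 0 ≤ 1 + C := by linarith [(norm_nonneg _).trans (hC 0)]
  refine ContinuousLinearMap.opNorm_le_bound _ (mul_nonneg tailSupX_nonneg hC₀) fun v => ?_
  have hv : ‖v - frameSum x f n v‖ ≤ (1 + C) * ‖v‖ := by
    have := ((frameSum x f n).le_opNorm v).trans
      (mul_le_mul_of_nonneg_right (hC n) (norm_nonneg v))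
    linarith [norm_sub_le v (frameSum x f n v)]
  calc ‖(g - dualFrameSum x f n g) v‖ = |g (v - frameSum x f n v)| := by
        simp [dualFrameSum_apply_eq_comp, Real.norm_eq_abs]
    _ ≤ tailSupX x g n * ‖v - frameSum x f n v‖ :=
        abs_le_tailSupX_mul_norm (sub_frameSum_mem_closure_span hframe n v)
    _ ≤ tailSupX x g n * ((1 + C) * ‖v‖) := mul_le_mul_of_nonneg_left hv tailSupX_nonneg
    _ = tailSupX x g n * (1 + C) * ‖v‖ := by ring

theorem mem_convergenceSubmodule_dualFrameSum_of_tendsto_tailSupX [CompleteSpace X]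
    (hframe : ∀ v, Tendsto (fun n => frameSum x f n v) atTop (𝓝 v))
    (hg : Tendsto (tailSupX x g) atTop (𝓝 0)) :
    g ∈ convergenceSubmodule (dualFrameSum x f) atTop := by
  obtain ⟨C, hC⟩ := exists_norm_frameSum_le hframe
  rw [mem_convergenceSubmodule, tendsto_iff_norm_sub_tendsto_zero]
  refine squeeze_zero (fun _ => norm_nonneg _) (fun n => ?_) (by simpa using hg.mul_const (1 + C))
  rw [norm_sub_rev]
  exact norm_sub_dualFrameSum_le hframe hC g n

end TailSup

theorem schauderFrame_Y_closed_subspace_general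
    {X : Type*} [NormedAddCommGroup X] [NormedSpace ℝ X] [CompleteSpace X]
    (x : ℕ → X) (f : ℕ → X →L[ℝ] ℝ)
    (hframe : ∀ v : X,
      Tendsto (fun n => ∑ i ∈ Finset.range n, f i v • x i) atTop (𝓝 v)) :
    (∃ Y : Submodule ℝ (X →L[ℝ] ℝ), IsClosed (Y : Set (X →L[ℝ] ℝ)) ∧
      ∀ g : X →L[ℝ] ℝ, g ∈ Y ↔
        Tendsto (fun n => ∑ i ∈ Finset.range n, g (x i) • f i) atTop (𝓝 g)) ∧
    ((∀ m : ℕ, Tendsto (tailSupX x (f m)) atTop (𝓝 0)) →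
      {g : X →L[ℝ] ℝ |
          Tendsto (fun n => ∑ i ∈ Finset.range n, g (x i) • f i) atTop (𝓝 g)} =
        closure ((Submodule.span ℝ (Set.range f) : Submodule ℝ (X →L[ℝ] ℝ)) :
          Set (X →L[ℝ] ℝ))) := by
  simp_rw [← frameSum_apply] at hframe
  simp_rw [← dualFrameSum_apply]
  obtain ⟨C, hC⟩ := exists_norm_frameSum_le hframe
  have hclosed := isClosed_convergenceSubmodule (T := dualFrameSum x f) atTop
    ⟨C, fun n => (norm_dualFrameSum_le n).trans (hC n)⟩
  refine ⟨⟨_, hclosed, fun g => mem_convergenceSubmodule⟩, fun hshrink => ?_⟩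
  refine (closure_minimal ?_ hclosed).antisymm' fun g hg =>
    mem_closure_of_tendsto hg (.of_forall fun n => dualFrameSum_apply_mem_span n g)
  refine Submodule.span_le.mpr (Set.range_subset_iff.mpr fun m => ?_)
  exact mem_convergenceSubmodule_dualFrameSum_of_tendsto_tailSupX hframe (hshrink m)

/-- Let `(x i, f i)` be a Schauder frame of a Banach space `X`. Then
`Y = { g ∈ X* : ∑ g (x i) • f i converges in norm to g }` is a norm-closed linear subspace
of `X*`; moreover, if the frame is locally shrinking, then `Y` equals the closed linear
span of `(f i)` in `X*`. -/
theorem schauderFrame_Y_closed_subspace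
    {X : Type*} [NormedAddCommGroup X] [NormedSpace ℝ X] [CompleteSpace X]
    (x : ℕ → X) (f : ℕ → X →L[ℝ] ℝ)
    (hx : ∀ i, x i ≠ 0) (hf : ∀ i, f i ≠ 0)
    (hframe : ∀ v : X,
      Tendsto (fun n => ∑ i ∈ Finset.range n, f i v • x i) atTop (𝓝 v)) :
    (∃ Y : Submodule ℝ (X →L[ℝ] ℝ), IsClosed (Y : Set (X →L[ℝ] ℝ)) ∧
      ∀ g : X →L[ℝ] ℝ, g ∈ Y ↔
        Tendsto (fun n => ∑ i ∈ Finset.range n, g (x i) • f i) atTop (𝓝 g)) ∧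
    ((∀ m : ℕ, Tendsto (tailSupX x (f m)) atTop (𝓝 0)) →
      {g : X →L[ℝ] ℝ |
          Tendsto (fun n => ∑ i ∈ Finset.range n, g (x i) • f i) atTop (𝓝 g)} =
        closure ((Submodule.span ℝ (Set.range f) : Submodule ℝ (X →L[ℝ] ℝ)) :
          Set (X →L[ℝ] ℝ))) :=
  schauderFrame_Y_closed_subspace_general x f hframe
end

section
/- Let (x_i, f_i) be a Schauder frame of a Banach space X such that for every x** ∈ X**, sup{ |x**(f)| : f ∈ span(f_i : i ≥ n), ‖f‖ ≤ 1 } → 0 as n → ∞. Then the frame is pre-boundedly complete. -/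
/-!
The partial sum operators `P n = ∑_{i<n} f i ⊗ x i` converge pointwise to the identity, so by
Banach–Steinhaus `‖P n‖ ≤ C` for all `n`. For `m ≤ n` and `g ∈ X*`, the functional
`g ∘ (P n - P m) = ∑_{m ≤ i < n} g (x i) f i` lies in `span (f i : i ≥ m)` and has norm at most
`2 C ‖g‖`, while applying `x**` to it gives `g (∑_{m ≤ i < n} x**(f i) x i)`. Hence the
partial sums of `∑ x**(f i) x i` satisfy `‖a n - a m‖ ≤ 2 C · tailSupBidual f x** m`, which
tends to `0`, so they form a Cauchy sequence in the Banach space `X`.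
-/

open Filter Topology

/-- `sup { |F g| : g ∈ span (f i : i ≥ n), ‖g‖ ≤ 1 }`, for `F ∈ X**`. -/
noncomputable def tailSupBidual {X : Type*} [NormedAddCommGroup X] [NormedSpace ℝ X]
    (f : ℕ → X →L[ℝ] ℝ) (F : (X →L[ℝ] ℝ) →L[ℝ] ℝ) (n : ℕ) : ℝ :=
  sSup ((fun g : X →L[ℝ] ℝ => |F g|) ''
    {g | g ∈ Submodule.span ℝ (f '' {i | n ≤ i}) ∧ ‖g‖ ≤ 1})

section RestrictedFunctional

variable {E : Type*} [NormedAddCommGroup E] [NormedSpace ℝ E]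

theorem bddAbove_abs_image_inter_closedBall (φ : E →L[ℝ] ℝ) (S : Set E) :
    BddAbove ((fun g => |φ g|) '' {g | g ∈ S ∧ ‖g‖ ≤ 1}) := by
  refine ⟨‖φ‖, ?_⟩
  rintro _ ⟨g, ⟨-, hg⟩, rfl⟩
  calc |φ g| = ‖φ g‖ := (Real.norm_eq_abs _).symm
    _ ≤ ‖φ‖ * ‖g‖ := φ.le_opNorm g
    _ ≤ ‖φ‖ := mul_le_of_le_one_right (norm_nonneg φ) hg

theorem abs_apply_le_sSup_mul_norm (φ : E →L[ℝ] ℝ) (S : Submodule ℝ E) {h : E} (hh : h ∈ S) :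
    |φ h| ≤ sSup ((fun g => |φ g|) '' {g | g ∈ S ∧ ‖g‖ ≤ 1}) * ‖h‖ := by
  rcases eq_or_ne h 0 with rfl | hne
  · simp
  have hpos : 0 < ‖h‖ := norm_pos_iff.2 hne
  have hunit : ‖‖h‖⁻¹ • h‖ ≤ 1 := by
    rw [norm_smul, norm_inv, norm_norm, inv_mul_cancel₀ hpos.ne']
  have hle : |φ (‖h‖⁻¹ • h)| ≤ sSup ((fun g => |φ g|) '' {g | g ∈ S ∧ ‖g‖ ≤ 1}) :=
    le_csSup (bddAbove_abs_image_inter_closedBall φ S) ⟨_, ⟨S.smul_mem _ hh, hunit⟩, rfl⟩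
  rwa [map_smul, smul_eq_mul, abs_mul, abs_inv, abs_norm, inv_mul_le_iff₀ hpos,
    mul_comm] at hle

end RestrictedFunctional

theorem tailSupBidual_nonneg {X : Type*} [NormedAddCommGroup X] [NormedSpace ℝ X]
    (f : ℕ → X →L[ℝ] ℝ) (F : (X →L[ℝ] ℝ) →L[ℝ] ℝ) (n : ℕ) : 0 ≤ tailSupBidual f F n :=
  Real.sSup_nonneg (by rintro _ ⟨g, -, rfl⟩; exact abs_nonneg _)

section SchauderFrame

open Finset

variable {X : Type*} [NormedAddCommGroup X] [NormedSpace ℝ X] (x : ℕ → X) (f : ℕ → X →L[ℝ] ℝ)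

noncomputable def framePartialSum (n : ℕ) : X →L[ℝ] X :=
  ∑ i ∈ range n, (f i).smulRight (x i)

theorem framePartialSum_apply (n : ℕ) (v : X) :
    framePartialSum x f n v = ∑ i ∈ range n, f i v • x i := by
  simp [framePartialSum]

theorem exists_forall_norm_framePartialSum_le [CompleteSpace X]
    (hcauchy : ∀ v : X, CauchySeq fun n => ∑ i ∈ range n, f i v • x i) :
    ∃ C, ∀ n, ‖framePartialSum x f n‖ ≤ C := by
  refine banach_steinhaus fun v => ?_
  obtain ⟨C, hC⟩ := (hcauchy v).isBounded_range.exists_norm_le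
  exact ⟨C, fun n => by rw [framePartialSum_apply]; exact hC _ ⟨n, rfl⟩⟩

theorem comp_framePartialSum (g : X →L[ℝ] ℝ) (n : ℕ) :
    g.comp (framePartialSum x f n) = ∑ i ∈ range n, g (x i) • f i := by
  ext v
  simp [framePartialSum_apply, mul_comm]

theorem comp_framePartialSum_sub_mem_span (g : X →L[ℝ] ℝ) {m n : ℕ} (hmn : m ≤ n) :
    g.comp (framePartialSum x f n) - g.comp (framePartialSum x f m) ∈
      Submodule.span ℝ (f '' {i | m ≤ i}) := by
  rw [comp_framePartialSum, comp_framePartialSum, ← sum_Ico_eq_sub _ hmn]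
  exact Submodule.sum_mem _ fun i hi =>
    Submodule.smul_mem _ _ (Submodule.subset_span ⟨i, (mem_Ico.1 hi).1, rfl⟩)

theorem bidual_apply_comp_framePartialSum (F : (X →L[ℝ] ℝ) →L[ℝ] ℝ) (g : X →L[ℝ] ℝ) (n : ℕ) :
    F (g.comp (framePartialSum x f n)) = g (∑ i ∈ range n, F (f i) • x i) := by
  simp [comp_framePartialSum, map_sum, mul_comm]

theorem norm_sub_le_tailSupBidual_mul {C : ℝ} (hC : ∀ n, ‖framePartialSum x f n‖ ≤ C)
    (F : (X →L[ℝ] ℝ) →L[ℝ] ℝ) {m n : ℕ} (hmn : m ≤ n) :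
    ‖∑ i ∈ range n, F (f i) • x i - ∑ i ∈ range m, F (f i) • x i‖ ≤
      tailSupBidual f F m * (2 * C) := by
  have hC0 : 0 ≤ C := (norm_nonneg _).trans (hC 0)
  refine NormedSpace.norm_le_dual_bound ℝ _
    (mul_nonneg (tailSupBidual_nonneg f F m) (by positivity)) fun g => ?_
  set φ := g.comp (framePartialSum x f n) - g.comp (framePartialSum x f m)
  have hφ : ‖φ‖ ≤ 2 * C * ‖g‖ :=
    calc ‖φ‖ = ‖g.comp (framePartialSum x f n - framePartialSum x f m)‖ := by
          rw [ContinuousLinearMap.comp_sub]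
      _ ≤ ‖g‖ * (C + C) := (g.opNorm_comp_le _).trans <| by
          gcongr; exact (norm_sub_le _ _).trans (add_le_add (hC n) (hC m))
      _ = 2 * C * ‖g‖ := by ring
  calc ‖g (∑ i ∈ range n, F (f i) • x i - ∑ i ∈ range m, F (f i) • x i)‖ = |F φ| := by
        rw [Real.norm_eq_abs, map_sub, map_sub, bidual_apply_comp_framePartialSum,
          bidual_apply_comp_framePartialSum]
    _ ≤ tailSupBidual f F m * ‖φ‖ :=
        abs_apply_le_sSup_mul_norm F _ (comp_framePartialSum_sub_mem_span x f g hmn)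
    _ ≤ tailSupBidual f F m * (2 * C * ‖g‖) := by
        gcongr; exact tailSupBidual_nonneg f F m
    _ = tailSupBidual f F m * (2 * C) * ‖g‖ := by ring

end SchauderFrame

theorem schauderFrame_preBoundedlyComplete_general
    {X : Type*} [NormedAddCommGroup X] [NormedSpace ℝ X] [CompleteSpace X]
    (x : ℕ → X) (f : ℕ → X →L[ℝ] ℝ)
    (hframe : ∀ v : X,
      Tendsto (fun n => ∑ i ∈ Finset.range n, f i v • x i) atTop (𝓝 v))
    (htail : ∀ F : (X →L[ℝ] ℝ) →L[ℝ] ℝ, Tendsto (tailSupBidual f F) atTop (𝓝 0)) :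
    ∀ F : (X →L[ℝ] ℝ) →L[ℝ] ℝ, ∃ v : X,
      Tendsto (fun n => ∑ i ∈ Finset.range n, F (f i) • x i) atTop (𝓝 v) := by
  obtain ⟨C, hC⟩ := exists_forall_norm_framePartialSum_le x f fun v => (hframe v).cauchySeq
  intro F
  refine cauchySeq_tendsto_of_complete <|
    cauchySeq_of_le_tendsto_0' (fun m => tailSupBidual f F m * (2 * C)) (fun m n hmn => ?_)
      (by simpa using (htail F).mul_const (2 * C))
  rw [dist_comm, dist_eq_norm]
  exact norm_sub_le_tailSupBidual_mul x f hC F hmn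

/-- If `(x i, f i)` is a Schauder frame of a Banach space `X` such that
for every `x** ∈ X**` one has `‖x**|span(f i : i ≥ n)‖ → 0`, then the frame is
pre-boundedly complete: for every `x** ∈ X**`, the series `∑ x**(f i) • x i` converges
in norm in `X`. -/
theorem schauderFrame_preBoundedlyComplete
    {X : Type*} [NormedAddCommGroup X] [NormedSpace ℝ X] [CompleteSpace X]
    (x : ℕ → X) (f : ℕ → X →L[ℝ] ℝ)
    (hx : ∀ i, x i ≠ 0) (hf : ∀ i, f i ≠ 0)
    (hframe : ∀ v : X,
      Tendsto (fun n => ∑ i ∈ Finset.range n, f i v • x i) atTop (𝓝 v))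
    (htail : ∀ F : (X →L[ℝ] ℝ) →L[ℝ] ℝ, Tendsto (tailSupBidual f F) atTop (𝓝 0)) :
    ∀ F : (X →L[ℝ] ℝ) →L[ℝ] ℝ, ∃ v : X,
      Tendsto (fun n => ∑ i ∈ Finset.range n, F (f i) • x i) atTop (𝓝 v) :=
  schauderFrame_preBoundedlyComplete_general x f hframe htail
end

section
/- Let (x_i, f_i) be an unconditional and locally shrinking Schauder frame of a Banach space X with unconditional constant K_u, and let (u_i) be a normalized block sequence of (x_i). Then for any ε > 0 there is a subsequence (v_i) of (u_i) which is (K_u + ε)-unconditional; that is, for all finitely supported real scalar sequences (λ_i) and all sign sequences (ε_i) ∈ {−1,1}^ℕ, one has ‖Σ ε_i λ_i v_i‖ ≤ (K_u + ε)‖Σ λ_i v_i‖. -/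
open Filter Topology

/-- `u` is a normalized block sequence of `(x i)`. -/
def IsNormalizedBlock {X : Type*} [NormedAddCommGroup X] [NormedSpace ℝ X]
    (x : ℕ → X) (u : ℕ → X) : Prop :=
  ∃ (m n : ℕ → ℕ) (a : ℕ → ℝ), (∀ k, m k ≤ n k) ∧ (∀ k, n k < m (k + 1)) ∧
    (∀ k, u k = ∑ i ∈ Finset.Icc (m k) (n k), a i • x i) ∧ ∀ k, ‖u k‖ = 1

/-!
Let `P L = ∑ i < L, f i ⬝ x i` be the partial sum operators of the frame. Flipping the signs
on `[L, L')` turns the expansion of `v` into `v - 2 (P L' - P L) v`, so every block `P L' - P L`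
has norm at most `(1 + Ku) / 2`. Local shrinking gives `P L (u k) → 0` as `k → ∞`, while
`P L v → v` as `L → ∞`; so the subsequence `v k = u (φ k)` and cut points `M k` can be chosen
recursively so that `v k` lies, up to errors decaying like `4⁻ᵏ`, in the range of the block
`P (M (k + 1)) - P (M k)` and is almost killed by the other blocks. For `w = ∑ λ k v k` the
signed sum `∑ σ k λ k v k` is then close to `∑ σ k (P (M (k + 1)) - P (M k)) w + (w - P (M N) w)`,
the expansion of `w` with the sign `σ k` on the `k`-th block, whose norm is at most `Ku ‖w‖`.
The error is a small multiple of `max |λ k|`, which is itself at most `(1 + Ku) ‖w‖`.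
-/

open Finset

def blockSignedSum {X : Type*} [NormedAddCommGroup X] [NormedSpace ℝ X] (P : ℕ → X →L[ℝ] X)
    (M : ℕ → ℕ) (σ : ℕ → ℝ) (N : ℕ) (v : X) : X :=
  ∑ k ∈ range N, σ k • (P (M (k + 1)) v - P (M k) v) + (v - P (M N) v)

section Frame

variable {X : Type*} [NormedAddCommGroup X] [NormedSpace ℝ X] (x : ℕ → X) (f : ℕ → X →L[ℝ] ℝ)

noncomputable def partialSumOp (L : ℕ) : X →L[ℝ] X :=
  ∑ i ∈ range L, (f i).smulRight (x i)

@[simp]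
lemma partialSumOp_apply (L : ℕ) (v : X) :
    partialSumOp x f L v = ∑ i ∈ range L, f i v • x i := by
  simp [partialSumOp]

lemma partialSumOp_sub_partialSumOp {L L' : ℕ} (h : L ≤ L') (v : X) :
    partialSumOp x f L' v - partialSumOp x f L v = ∑ i ∈ Ico L L', f i v • x i := by
  simp [sum_Ico_eq_sub _ h]

def signedSumNorms : Set ℝ :=
  {r | ∃ (v : X) (σ : ℕ → ℝ), ‖v‖ ≤ 1 ∧ (∀ i, σ i = 1 ∨ σ i = -1) ∧
    r = ‖∑' i, σ i • (f i v • x i)‖}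

variable {x f}

lemma tendsto_partialSumOp_apply (huncond : ∀ v : X, HasSum (fun i => f i v • x i) v) (v : X) :
    Tendsto (fun L => partialSumOp x f L v) atTop (𝓝 v) := by
  simpa using (huncond v).tendsto_sum_nat

lemma hasSum_smul_of_eq_one_off (huncond : ∀ v : X, HasSum (fun i => f i v • x i) v)
    {τ : ℕ → ℝ} (s : Finset ℕ) (hτ : ∀ i ∉ s, τ i = 1) (v : X) :
    HasSum (fun i => τ i • (f i v • x i)) (v + ∑ i ∈ s, (τ i - 1) • (f i v • x i)) := by
  have hs : HasSum (fun i => (τ i - 1) • (f i v • x i)) (∑ i ∈ s, (τ i - 1) • (f i v • x i)) :=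
    hasSum_sum_of_ne_finset_zero fun i hi => by simp [hτ i hi]
  convert (huncond v).add hs using 1
  ext i
  rw [sub_smul, one_smul, add_sub_cancel]

lemma norm_le_of_hasSum_sign_smul {Ku : ℝ} (hKu : Ku ∈ upperBounds (signedSumNorms x f))
    {τ : ℕ → ℝ} (hτ : ∀ i, τ i = 1 ∨ τ i = -1) {v y : X}
    (hy : HasSum (fun i => τ i • (f i v • x i)) y) : ‖y‖ ≤ Ku * ‖v‖ := by
  rcases eq_or_ne v 0 with rfl | hv
  · have h0 : (fun i => τ i • (f i 0 • x i)) = 0 := by ext; simp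
    rw [h0] at hy
    simp [hy.unique hasSum_zero]
  have hv' : 0 < ‖v‖ := norm_pos_iff.2 hv
  have hscaled : HasSum (fun i => τ i • (f i (‖v‖⁻¹ • v) • x i)) (‖v‖⁻¹ • y) := by
    convert hy.const_smul ‖v‖⁻¹ using 1
    ext i
    rw [map_smul, smul_eq_mul, mul_smul, smul_comm]
  have h := hKu ⟨‖v‖⁻¹ • v, τ, by simp [norm_smul, hv'.ne'], hτ, by rw [hscaled.tsum_eq]⟩
  rw [norm_smul, norm_inv, norm_norm, inv_mul_le_iff₀ hv'] at h
  linarith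

lemma norm_partialSumOp_sub_le {Ku : ℝ} (hKu : Ku ∈ upperBounds (signedSumNorms x f))
    (huncond : ∀ v : X, HasSum (fun i => f i v • x i) v) {L L' : ℕ} (h : L ≤ L') (v : X) :
    ‖partialSumOp x f L' v - partialSumOp x f L v‖ ≤ (1 + Ku) / 2 * ‖v‖ := by
  let τ : ℕ → ℝ := fun i => if i ∈ Ico L L' then -1 else 1
  have hy := hasSum_smul_of_eq_one_off huncond (Ico L L') (τ := τ) (fun i hi => if_neg hi) v
  have hsum : v + ∑ i ∈ Ico L L', (τ i - 1) • (f i v • x i) =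
      v - (2 : ℝ) • ∑ i ∈ Ico L L', f i v • x i := by
    rw [smul_sum, sub_eq_add_neg, ← sum_neg_distrib]
    congr 1
    refine sum_congr rfl fun i hi => ?_
    rw [show τ i = -1 from if_pos hi, ← neg_smul]
    norm_num
  rw [hsum, ← partialSumOp_sub_partialSumOp x f h] at hy
  set d := partialSumOp x f L' v - partialSumOp x f L v
  have hyv := norm_le_of_hasSum_sign_smul hKu
    (fun i => by dsimp only [τ]; split_ifs <;> norm_num) hy
  have h2d : ‖(2 : ℝ) • d‖ ≤ ‖v‖ + ‖v - (2 : ℝ) • d‖ := by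
    simpa using norm_sub_le v (v - (2 : ℝ) • d)
  rw [norm_smul, Real.norm_two] at h2d
  linarith

def blockSign (M : ℕ → ℕ) (σ : ℕ → ℝ) (N i : ℕ) : ℝ :=
  if i < M N then σ (Nat.findGreatest (fun k => M k ≤ i) N) else 1

lemma blockSign_of_mem_Ico {M : ℕ → ℕ} (hM : StrictMono M) (σ : ℕ → ℝ) {N k i : ℕ}
    (hk : k < N) (hi : i ∈ Ico (M k) (M (k + 1))) : blockSign M σ N i = σ k := by
  rw [mem_Ico] at hi
  rw [blockSign, if_pos (hi.2.trans_le (hM.monotone hk))]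
  congr 1
  refine Nat.findGreatest_eq_iff.2 ⟨hk.le, fun _ => hi.1, fun n hkn _ hn => ?_⟩
  exact (hi.2.trans_le (hM.monotone hkn)).not_ge hn

lemma blockSign_eq_one_or {σ : ℕ → ℝ} (hσ : ∀ k, σ k = 1 ∨ σ k = -1) (M : ℕ → ℕ) (N i : ℕ) :
    blockSign M σ N i = 1 ∨ blockSign M σ N i = -1 := by
  unfold blockSign
  split_ifs
  exacts [hσ _, Or.inl rfl]

lemma sum_range_eq_sum_Ico_blocks {G : Type*} [AddCommMonoid G] {M : ℕ → ℕ} (hM : Monotone M)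
    (hM0 : M 0 = 0) (g : ℕ → G) (N : ℕ) :
    ∑ i ∈ range (M N), g i = ∑ k ∈ range N, ∑ i ∈ Ico (M k) (M (k + 1)), g i := by
  induction N with
  | zero => simp [hM0]
  | succ N ih => rw [sum_range_succ, ← ih, sum_range_add_sum_Ico _ (hM N.le_succ)]

lemma norm_blockSigned_le {Ku : ℝ} (hKu : Ku ∈ upperBounds (signedSumNorms x f))
    (huncond : ∀ v : X, HasSum (fun i => f i v • x i) v) {M : ℕ → ℕ} (hM : StrictMono M)
    (hM0 : M 0 = 0) {σ : ℕ → ℝ} (hσ : ∀ k, σ k = 1 ∨ σ k = -1) (N : ℕ) (v : X) :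
    ‖blockSignedSum (partialSumOp x f) M σ N v‖ ≤ Ku * ‖v‖ := by
  refine norm_le_of_hasSum_sign_smul hKu (blockSign_eq_one_or hσ M N) ?_
  convert hasSum_smul_of_eq_one_off huncond (range (M N)) (τ := blockSign M σ N)
    (fun i hi => if_neg fun h => hi (mem_range.2 h)) v using 1
  have hblock : ∀ k ∈ range N,
      ∑ i ∈ Ico (M k) (M (k + 1)), (blockSign M σ N i - 1) • (f i v • x i) =
        σ k • (partialSumOp x f (M (k + 1)) v - partialSumOp x f (M k) v) -
          (partialSumOp x f (M (k + 1)) v - partialSumOp x f (M k) v) := by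
    intro k hk
    rw [sum_congr rfl fun i hi => by rw [blockSign_of_mem_Ico hM σ (mem_range.1 hk) hi],
      ← smul_sum, partialSumOp_sub_partialSumOp x f (hM.monotone k.le_succ), sub_smul, one_smul]
  rw [blockSignedSum, sum_range_eq_sum_Ico_blocks hM.monotone hM0, sum_congr rfl hblock,
    sum_sub_distrib, sum_range_sub (fun k => partialSumOp x f (M k) v), hM0]
  simp only [partialSumOp_apply, range_zero, sum_empty, sub_zero]
  abel

end Frame

section Shrinking

variable {X : Type*} [NormedAddCommGroup X] [NormedSpace ℝ X] {x : ℕ → X} {u : ℕ → X}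

lemma abs_apply_le_tailSupX (g : X →L[ℝ] ℝ) {n : ℕ} {z : X}
    (hz : z ∈ Submodule.span ℝ (x '' {i | n ≤ i})) (hz1 : ‖z‖ ≤ 1) :
    |g z| ≤ tailSupX x g n := by
  refine le_csSup ⟨‖g‖, ?_⟩ ⟨z, ⟨hz, hz1⟩, rfl⟩
  rintro _ ⟨z', ⟨_, hz'⟩, rfl⟩
  exact (g.le_opNorm z').trans (mul_le_of_le_one_right (norm_nonneg _) hz')

lemma IsNormalizedBlock.norm_eq_one (hu : IsNormalizedBlock x u) (k : ℕ) : ‖u k‖ = 1 := by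
  obtain ⟨_, _, _, _, _, _, hnorm⟩ := hu
  exact hnorm k

lemma IsNormalizedBlock.exists_mem_span (hu : IsNormalizedBlock x u) :
    ∃ m : ℕ → ℕ, StrictMono m ∧ ∀ k, u k ∈ Submodule.span ℝ (x '' {i | m k ≤ i}) := by
  obtain ⟨m, n, a, hmn, hnm, hu, -⟩ := hu
  refine ⟨m, strictMono_nat_of_lt_succ fun k => (hmn k).trans_lt (hnm k), fun k => ?_⟩
  rw [hu k]
  exact Submodule.sum_mem _ fun i hi =>
    Submodule.smul_mem _ _ (Submodule.subset_span ⟨i, (mem_Icc.1 hi).1, rfl⟩)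

lemma IsNormalizedBlock.tendsto_apply (hu : IsNormalizedBlock x u) {g : X →L[ℝ] ℝ}
    (hg : Tendsto (tailSupX x g) atTop (𝓝 0)) : Tendsto (fun k => g (u k)) atTop (𝓝 0) := by
  obtain ⟨m, hm, hspan⟩ := hu.exists_mem_span
  exact squeeze_zero_norm (fun k => abs_apply_le_tailSupX g (hspan k) (hu.norm_eq_one k).le)
    (hg.comp hm.tendsto_atTop)

lemma IsNormalizedBlock.tendsto_partialSumOp_apply (hu : IsNormalizedBlock x u)
    {f : ℕ → X →L[ℝ] ℝ} (hshr : ∀ i, Tendsto (tailSupX x (f i)) atTop (𝓝 0)) (L : ℕ) :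
    Tendsto (fun k => partialSumOp x f L (u k)) atTop (𝓝 0) := by
  simpa using tendsto_finsetSum (range L) fun i _ => (hu.tendsto_apply (hshr i)).smul_const (x i)

end Shrinking

section Construction

variable {X : Type*} [NormedAddCommGroup X] [NormedSpace ℝ X]

/-- The vectors `u (φ k)` are almost supported, for the expansion `P`, on the intervals
`[M k, M (k + 1))`. The tail condition is imposed on all `u n` with `n ≤ φ k`, so that it is
inherited by the earlier terms of the subsequence. -/
structure AlmostBlockSupported (P : ℕ → X →L[ℝ] X) (u : ℕ → X) (γ : ℕ → ℝ) (φ M : ℕ → ℕ) :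
    Prop where
  strictMono_φ : StrictMono φ
  strictMono_M : StrictMono M
  M_zero : M 0 = 0
  norm_head_le : ∀ k L, L ≤ M k → ‖P L (u (φ k))‖ ≤ γ k
  norm_tail_le : ∀ k n L, n ≤ φ k → M (k + 1) ≤ L → ‖P L (u n) - u n‖ ≤ γ k

lemma exists_almostBlockSupported {P : ℕ → X →L[ℝ] X} {u : ℕ → X} {γ : ℕ → ℝ}
    (hhead : ∀ L, Tendsto (fun n => P L (u n)) atTop (𝓝 0))
    (htail : ∀ v, Tendsto (fun L => P L v) atTop (𝓝 v)) (hγ : ∀ k, 0 < γ k) :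
    ∃ φ M, AlmostBlockSupported P u γ φ M := by
  have step : ∀ k (p : ℕ × ℕ), ∃ q : ℕ × ℕ, p.1 < q.1 ∧ p.2 < q.2 ∧
      (∀ L ≤ p.2, ‖P L (u q.1)‖ ≤ γ k) ∧ ∀ n L, n ≤ q.1 → q.2 ≤ L → ‖P L (u n) - u n‖ ≤ γ k := by
    rintro k ⟨a, b⟩
    have hψ : ∀ᶠ n in atTop, a < n ∧ ∀ L ∈ range (b + 1), ‖P L (u n)‖ ≤ γ k :=
      (eventually_gt_atTop a).and <| (eventually_all_finset _).2 fun L _ =>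
        ((hhead L).eventually (Metric.closedBall_mem_nhds 0 (hγ k))).mono fun _ =>
          mem_closedBall_zero_iff.1
    obtain ⟨ψ, hψa, hψ⟩ := hψ.exists
    have hL : ∀ᶠ L in atTop, ∀ n ∈ range (ψ + 1), ‖P L (u n) - u n‖ ≤ γ k :=
      (eventually_all_finset _).2 fun n _ =>
        ((htail (u n)).eventually (Metric.closedBall_mem_nhds _ (hγ k))).mono fun _ =>
          mem_closedBall_iff_norm.1
    obtain ⟨L₀, hL₀⟩ := hL.exists_forall_of_atTop
    exact ⟨(ψ, max L₀ (b + 1)), hψa, by simp,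
      fun L hL => hψ L (mem_range.2 (Nat.lt_succ_of_le hL)),
      fun n L hn hL => hL₀ L (le_of_max_le_left hL) n (mem_range.2 (Nat.lt_succ_of_le hn))⟩
  choose next hnext using step
  let s : ℕ → ℕ × ℕ := fun k => Nat.rec (motive := fun _ => ℕ × ℕ) (0, 0) next k
  exact ⟨fun k => (s (k + 1)).1, fun k => (s k).2,
    strictMono_nat_of_lt_succ fun k => (hnext (k + 1) (s (k + 1))).1,
    strictMono_nat_of_lt_succ fun k => (hnext k (s k)).2.1, rfl,
    fun k => (hnext k (s k)).2.2.1, fun k => (hnext k (s k)).2.2.2⟩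

end Construction

section Estimates

variable {X : Type*} [NormedAddCommGroup X] [NormedSpace ℝ X]

lemma two_mul_quarter_pow_le {θ : ℝ} (hθ : 0 ≤ θ) {j k m : ℕ} (hj : j ≤ m) (hk : k ≤ m + 1) :
    2 * (θ * (1 / 4) ^ m) ≤ 4 * θ * (1 / 2) ^ (j + k) := by
  have h : (1 / 2 : ℝ) ^ (2 * m + 1) ≤ (1 / 2) ^ (j + k) :=
    pow_le_pow_of_le_one (by norm_num) (by norm_num) (by omega)
  rw [pow_succ, pow_mul] at h
  calc 2 * (θ * (1 / 4) ^ m) = 4 * θ * (((1 / 2) ^ 2) ^ m * (1 / 2)) := by norm_num; ring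
    _ ≤ 4 * θ * (1 / 2) ^ (j + k) := by gcongr

lemma norm_sum_smul_le_geom {N k : ℕ} {θ Λ : ℝ} (hθ : 0 ≤ θ) (hΛ : 0 ≤ Λ) {lam : ℕ → ℝ}
    (hlam : ∀ j < N, |lam j| ≤ Λ) {e : ℕ → X} (he : ∀ j < N, ‖e j‖ ≤ 4 * θ * (1 / 2) ^ (j + k)) :
    ‖∑ j ∈ range N, lam j • e j‖ ≤ 8 * θ * Λ * (1 / 2) ^ k := by
  calc ‖∑ j ∈ range N, lam j • e j‖
      ≤ ∑ j ∈ range N, Λ * (4 * θ * (1 / 2) ^ (j + k)) := by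
        refine (norm_sum_le _ _).trans (sum_le_sum fun j hj => ?_)
        rw [norm_smul, Real.norm_eq_abs]
        exact mul_le_mul (hlam j (mem_range.1 hj)) (he j (mem_range.1 hj)) (norm_nonneg _) hΛ
    _ = 4 * θ * Λ * (1 / 2) ^ k * ∑ j ∈ range N, (1 / 2 : ℝ) ^ j := by
        rw [mul_sum]
        exact sum_congr rfl fun j _ => by ring
    _ ≤ 4 * θ * Λ * (1 / 2) ^ k * 2 := by gcongr; exact sum_geometric_two_le N
    _ = 8 * θ * Λ * (1 / 2) ^ k := by ring

namespace AlmostBlockSupported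

variable {P : ℕ → X →L[ℝ] X} {u : ℕ → X} {φ M : ℕ → ℕ}

lemma norm_tail_le_of_le {γ : ℕ → ℝ} (h : AlmostBlockSupported P u γ φ M) {j k L : ℕ}
    (hjk : j ≤ k) (hL : M (k + 1) ≤ L) : ‖P L (u (φ j)) - u (φ j)‖ ≤ γ k :=
  h.norm_tail_le k _ L (h.strictMono_φ.monotone hjk) hL

lemma norm_blockEntry_le {γ : ℕ → ℝ} (h : AlmostBlockSupported P u γ φ M) (hγ : Antitone γ)
    (j k : ℕ) :
    ‖(if k = j then u (φ j) else 0) - (P (M (k + 1)) (u (φ j)) - P (M k) (u (φ j)))‖ ≤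
      2 * γ (max j (k - 1)) := by
  have hM := h.strictMono_M.monotone
  rcases lt_trichotomy k j with hkj | rfl | hjk
  · rw [if_neg hkj.ne, zero_sub, norm_neg, max_eq_left (by omega), two_mul]
    exact (norm_sub_le _ _).trans
      (add_le_add (h.norm_head_le j _ (hM hkj)) (h.norm_head_le j _ (hM hkj.le)))
  · rw [if_pos rfl, max_eq_left (by omega), two_mul]
    calc _ = ‖-(P (M (k + 1)) (u (φ k)) - u (φ k)) + P (M k) (u (φ k))‖ := by congr 1; abel
      _ ≤ γ k + γ k := (norm_add_le _ _).trans (add_le_add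
          (by rw [norm_neg]; exact h.norm_tail_le_of_le le_rfl le_rfl) (h.norm_head_le k _ le_rfl))
  · obtain ⟨k, rfl⟩ : ∃ k', k = k' + 1 := ⟨k - 1, by omega⟩
    rw [if_neg hjk.ne', zero_sub, norm_neg, Nat.add_sub_cancel, max_eq_right (by omega), two_mul]
    calc _ = ‖(P (M (k + 1 + 1)) (u (φ j)) - u (φ j)) - (P (M (k + 1)) (u (φ j)) - u (φ j))‖ := by
          congr 1; abel
      _ ≤ γ (k + 1) + γ k := (norm_sub_le _ _).trans (add_le_add
          (h.norm_tail_le_of_le (by omega) le_rfl) (h.norm_tail_le_of_le (by omega) le_rfl))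
      _ ≤ γ k + γ k := by gcongr; exact hγ k.le_succ

variable {θ : ℝ} {N : ℕ} {lam : ℕ → ℝ} {Λ : ℝ}

lemma norm_smul_sub_blockDiff_le (h : AlmostBlockSupported P u (fun m => θ * (1 / 4) ^ m) φ M)
    (hθ : 0 ≤ θ) (hΛ : 0 ≤ Λ) (hlam : ∀ j < N, |lam j| ≤ Λ) {k : ℕ} (hk : k < N) :
    ‖lam k • u (φ k) - (P (M (k + 1)) (∑ j ∈ range N, lam j • u (φ j)) -
      P (M k) (∑ j ∈ range N, lam j • u (φ j)))‖ ≤ 8 * θ * Λ * (1 / 2) ^ k := by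
  have hγ : Antitone fun m => θ * (1 / 4 : ℝ) ^ m := fun a b hab =>
    mul_le_mul_of_nonneg_left (pow_le_pow_of_le_one (by norm_num) (by norm_num) hab) hθ
  convert norm_sum_smul_le_geom (k := k) hθ hΛ hlam fun j _ =>
    (h.norm_blockEntry_le hγ j k).trans (two_mul_quarter_pow_le hθ (le_max_left _ _) (by omega))
    using 2
  simp only [map_sum, map_smul, smul_sub, smul_ite, smul_zero, sum_sub_distrib,
    sum_ite_eq, mem_range.2 hk, if_true]

lemma norm_sub_partialSum_le (h : AlmostBlockSupported P u (fun m => θ * (1 / 4) ^ m) φ M)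
    (hθ : 0 ≤ θ) (hΛ : 0 ≤ Λ) (hlam : ∀ j < N, |lam j| ≤ Λ) :
    ‖∑ j ∈ range N, lam j • u (φ j) - P (M N) (∑ j ∈ range N, lam j • u (φ j))‖ ≤
      8 * θ * Λ * (1 / 2) ^ N := by
  convert norm_sum_smul_le_geom (k := N) (e := fun j => u (φ j) - P (M N) (u (φ j))) hθ hΛ hlam
    fun j hj => ?_ using 2
  · simp only [map_sum, map_smul, smul_sub, sum_sub_distrib]
  obtain ⟨n, rfl⟩ : ∃ n, N = n + 1 := ⟨N - 1, by omega⟩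
  rw [norm_sub_rev]
  calc _ ≤ θ * (1 / 4) ^ n := h.norm_tail_le_of_le (by omega) le_rfl
    _ ≤ 2 * (θ * (1 / 4) ^ n) := le_mul_of_one_le_left (by positivity) one_le_two
    _ ≤ _ := two_mul_quarter_pow_le hθ (by omega) le_rfl

lemma norm_sum_sign_smul_sub_le (h : AlmostBlockSupported P u (fun m => θ * (1 / 4) ^ m) φ M)
    (hθ : 0 ≤ θ) (hΛ : 0 ≤ Λ) (hlam : ∀ j < N, |lam j| ≤ Λ) {σ : ℕ → ℝ}
    (hσ : ∀ k, σ k = 1 ∨ σ k = -1) :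
    ‖∑ k ∈ range N, (σ k * lam k) • u (φ k) -
      blockSignedSum P M σ N (∑ j ∈ range N, lam j • u (φ j))‖ ≤ 16 * θ * Λ := by
  set w := ∑ j ∈ range N, lam j • u (φ j)
  have hdecomp : ∑ k ∈ range N, (σ k * lam k) • u (φ k) - blockSignedSum P M σ N w =
      ∑ k ∈ range N, σ k • (lam k • u (φ k) - (P (M (k + 1)) w - P (M k) w)) -
        (w - P (M N) w) := by
    simp only [blockSignedSum, smul_sub, mul_smul, sum_sub_distrib]
    abel
  have hσ1 : ∀ k, ‖σ k‖ = 1 := fun k => by rcases hσ k with h | h <;> simp [h]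
  rw [hdecomp]
  calc _ ≤ ∑ k ∈ range N, ‖lam k • u (φ k) - (P (M (k + 1)) w - P (M k) w)‖ + ‖w - P (M N) w‖ :=
        (norm_sub_le _ _).trans (add_le_add_left ((norm_sum_le _ _).trans_eq
          (sum_congr rfl fun k _ => by rw [norm_smul, hσ1, one_mul])) _)
    _ ≤ ∑ k ∈ range N, 8 * θ * Λ * (1 / 2) ^ k + 8 * θ * Λ * (1 / 2) ^ N :=
        add_le_add (sum_le_sum fun k hk => h.norm_smul_sub_blockDiff_le hθ hΛ hlam
          (mem_range.1 hk)) (h.norm_sub_partialSum_le hθ hΛ hlam)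
    _ = 8 * θ * Λ * ∑ k ∈ range (N + 1), (1 / 2 : ℝ) ^ k := by rw [sum_range_succ, mul_add, mul_sum]
    _ ≤ 8 * θ * Λ * 2 := by gcongr; exact sum_geometric_two_le _
    _ = 16 * θ * Λ := by ring

theorem norm_sum_sign_smul_le (h : AlmostBlockSupported P u (fun m => θ * (1 / 4) ^ m) φ M)
    (hθ : 0 ≤ θ) (hθ' : θ ≤ 1 / 16) (hu : ∀ n, ‖u n‖ = 1) {K Ku : ℝ}
    (hK : ∀ k v, ‖P (M (k + 1)) v - P (M k) v‖ ≤ K * ‖v‖) {σ : ℕ → ℝ}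
    (hσ : ∀ k, σ k = 1 ∨ σ k = -1)
    (hKu : ∀ v, ‖blockSignedSum P M σ N v‖ ≤ Ku * ‖v‖) (lam : ℕ → ℝ) :
    ‖∑ k ∈ range N, (σ k * lam k) • u (φ k)‖ ≤
      (Ku + 32 * K * θ) * ‖∑ k ∈ range N, lam k • u (φ k)‖ := by
  set w := ∑ j ∈ range N, lam j • u (φ j)
  rcases N.eq_zero_or_pos with rfl | hN
  · simp [w]
  obtain ⟨j₀, hj₀, hmax⟩ :=
    exists_max_image (range N) (fun j => |lam j|) (nonempty_range_iff.2 hN.ne')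
  have hlam : ∀ j < N, |lam j| ≤ |lam j₀| := fun j hj => hmax j (mem_range.2 hj)
  have hΛ := abs_nonneg (lam j₀)
  have hcoeff : |lam j₀| ≤ K * ‖w‖ + 8 * θ * |lam j₀| := calc
    |lam j₀| = ‖lam j₀ • u (φ j₀)‖ := by rw [norm_smul, hu, mul_one, Real.norm_eq_abs]
    _ ≤ ‖P (M (j₀ + 1)) w - P (M j₀) w‖ +
        ‖lam j₀ • u (φ j₀) - (P (M (j₀ + 1)) w - P (M j₀) w)‖ := norm_le_insert' _ _
    _ ≤ K * ‖w‖ + 8 * θ * |lam j₀| * 1 := add_le_add (hK _ _)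
        ((h.norm_smul_sub_blockDiff_le hθ hΛ hlam (mem_range.1 hj₀)).trans
          (by gcongr; exact pow_le_one₀ (by norm_num) (by norm_num)))
    _ = K * ‖w‖ + 8 * θ * |lam j₀| := by rw [mul_one]
  have hΛK : θ * |lam j₀| ≤ θ * (2 * K * ‖w‖) := by gcongr; nlinarith
  calc _ ≤ ‖blockSignedSum P M σ N w‖ +
        ‖∑ k ∈ range N, (σ k * lam k) • u (φ k) - blockSignedSum P M σ N w‖ :=
        norm_le_insert' _ _
    _ ≤ Ku * ‖w‖ + 16 * θ * |lam j₀| :=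
        add_le_add (hKu w) (h.norm_sum_sign_smul_sub_le hθ hΛ hlam hσ)
    _ ≤ (Ku + 32 * K * θ) * ‖w‖ := by linarith

end AlmostBlockSupported

end Estimates

theorem unconditionalSchauderFrame_block_unconditional_subsequence_general
    {X : Type*} [NormedAddCommGroup X] [NormedSpace ℝ X]
    (x : ℕ → X) (f : ℕ → X →L[ℝ] ℝ)
    (huncond : ∀ v : X, HasSum (fun i => f i v • x i) v)
    (hshr : ∀ m : ℕ, Tendsto (tailSupX x (f m)) atTop (𝓝 0))
    (Ku : ℝ)
    (hKu : IsLUB {r : ℝ | ∃ (v : X) (σ : ℕ → ℝ), ‖v‖ ≤ 1 ∧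
      (∀ i, σ i = 1 ∨ σ i = -1) ∧ r = ‖∑' i, σ i • (f i v • x i)‖} Ku)
    (u : ℕ → X) (hu : IsNormalizedBlock x u) :
    ∀ ε > (0 : ℝ), ∃ φ : ℕ → ℕ, StrictMono φ ∧
      ∀ (N : ℕ) (lam σ : ℕ → ℝ), (∀ i, σ i = 1 ∨ σ i = -1) →
        ‖∑ i ∈ Finset.range N, (σ i * lam i) • u (φ i)‖ ≤
          (Ku + ε) * ‖∑ i ∈ Finset.range N, lam i • u (φ i)‖ := by
  intro ε hε
  have hKu0 : 0 ≤ Ku := hKu.1 ⟨0, fun _ => 1, by simp, fun _ => Or.inl rfl, by simp⟩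
  set θ := min (1 / 16 : ℝ) (ε / (16 * (1 + Ku)))
  have hθ : 0 < θ := lt_min (by norm_num) (by positivity)
  have hθε : 16 * (1 + Ku) * θ ≤ ε := (le_div_iff₀' (by positivity)).1 (min_le_right _ _)
  obtain ⟨φ, M, hφM⟩ := exists_almostBlockSupported (γ := fun m => θ * (1 / 4) ^ m)
    (hu.tendsto_partialSumOp_apply hshr) (tendsto_partialSumOp_apply huncond)
    fun m => by positivity
  refine ⟨φ, hφM.strictMono_φ, fun N lam σ hσ => ?_⟩
  calc _ ≤ (Ku + 32 * ((1 + Ku) / 2) * θ) * ‖∑ i ∈ range N, lam i • u (φ i)‖ :=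
        hφM.norm_sum_sign_smul_le hθ.le (min_le_left _ _) hu.norm_eq_one
          (fun k => norm_partialSumOp_sub_le hKu.1 huncond (hφM.strictMono_M.monotone k.le_succ))
          hσ (norm_blockSigned_le hKu.1 huncond hφM.strictMono_M hφM.M_zero hσ N) lam
    _ ≤ (Ku + ε) * ‖∑ i ∈ range N, lam i • u (φ i)‖ := by gcongr; linarith

/-- Let `(x i, f i)` be an unconditional and locally shrinking Schauder
frame of a Banach space `X` with unconditional constant `Ku`, and `(u i)` a normalized
block sequence of `(x i)`. Then for every `ε > 0` there is a subsequence `(v i) = (u (φ i))`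
which is `(Ku + ε)`-unconditional. -/
theorem unconditionalSchauderFrame_block_unconditional_subsequence
    {X : Type*} [NormedAddCommGroup X] [NormedSpace ℝ X] [CompleteSpace X]
    (x : ℕ → X) (f : ℕ → X →L[ℝ] ℝ)
    (hx : ∀ i, x i ≠ 0) (hf : ∀ i, f i ≠ 0)
    (hframe : ∀ v : X,
      Tendsto (fun n => ∑ i ∈ Finset.range n, f i v • x i) atTop (𝓝 v))
    (huncond : ∀ v : X, HasSum (fun i => f i v • x i) v)
    (hshr : ∀ m : ℕ, Tendsto (tailSupX x (f m)) atTop (𝓝 0))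
    (Ku : ℝ)
    (hKu : IsLUB {r : ℝ | ∃ (v : X) (σ : ℕ → ℝ), ‖v‖ ≤ 1 ∧
      (∀ i, σ i = 1 ∨ σ i = -1) ∧ r = ‖∑' i, σ i • (f i v • x i)‖} Ku)
    (u : ℕ → X) (hu : IsNormalizedBlock x u) :
    ∀ ε > (0 : ℝ), ∃ φ : ℕ → ℕ, StrictMono φ ∧
      ∀ (N : ℕ) (lam σ : ℕ → ℝ), (∀ i, σ i = 1 ∨ σ i = -1) →
        ‖∑ i ∈ Finset.range N, (σ i * lam i) • u (φ i)‖ ≤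
          (Ku + ε) * ‖∑ i ∈ Finset.range N, lam i • u (φ i)‖ :=
  unconditionalSchauderFrame_block_unconditional_subsequence_general x f huncond hshr Ku hKu u hu
end
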